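/- For any Boolean function f on variables x_1,...,x_n and any variable x in Var(f): every prime implicant of f is either a prime implicant of (f | x̄) ∧ (f | x), or of the form x̄ ∧ t with t a prime implicant of f | x̄, or of the form x ∧ t with t a prime implicant of f | x. -/

import Mathlib

/-!
Split on how `x` occurs in the prime implicant `t`. If `t` contains the literal `x` (or `x̄`),
then `t` is that literal conjoined with a term not mentioning `x`, and a term `s` not mentioning
`x` implies `f | x` exactly when `x ∧ s` implies `f`; so minimality transfers between `t` and
its remainder. If `t` does not mention `x`, then `t` implies `f` exactly when it implies both
cofactors, and the same holds for every subterm of `t`.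
-/

/-- A term (or clause) over variables `V`: a finite set of literals,
where a literal is a pair (variable, polarity). -/
abbrev Term (V : Type*) := Finset (V × Bool)

/-- An assignment `y` satisfies a term `t` if all its literals hold. -/
def Term.sat {V : Type*} (t : Term V) (y : V → Bool) : Prop :=
  ∀ p ∈ t, y p.1 = p.2

/-- A term is consistent if no variable occurs with both polarities. -/
def Term.consistent {V : Type*} (t : Term V) : Prop :=
  ∀ v : V, ¬((v, true) ∈ t ∧ (v, false) ∈ t)

/-- `t` is an implicant of `f`: a consistent term all of whose models are models of `f`. -/
def Implicant {V : Type*} (f : (V → Bool) → Bool) (t : Term V) : Prop :=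
  Term.consistent t ∧ ∀ y, Term.sat t y → f y = true

/-- `t` is a prime implicant of `f`: an implicant no proper subterm of which is an implicant. -/
def PrimeImplicant {V : Type*} (f : (V → Bool) → Bool) (t : Term V) : Prop :=
  Implicant f t ∧ ∀ s ⊂ t, ¬ Implicant f s

/-- A sufficient reason for `x` given `f`: a prime implicant of `f` covering `x`. -/
def SuffReason {V : Type*} (f : (V → Bool) → Bool) (x : V → Bool) (t : Term V) : Prop :=
  PrimeImplicant f t ∧ Term.sat t x

/-- Conditioning of `f` by the literal `ℓ`: substitute the value making `ℓ` true. -/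
def condF {V : Type*} [DecidableEq V] (f : (V → Bool) → Bool) (l : V × Bool) :
    (V → Bool) → Bool :=
  fun y => f (Function.update y l.1 l.2)

theorem Finset.insert_ssubset_of_ssubset_erase {α : Type*} [DecidableEq α] {a : α}
    {s t : Finset α} (ha : a ∈ t) (hs : s ⊂ t.erase a) : insert a s ⊂ t := by
  have has : a ∉ s := fun h => Finset.notMem_erase a t (hs.subset h)
  refine Finset.ssubset_iff_subset_ne.mpr
    ⟨Finset.insert_subset ha (hs.subset.trans (Finset.erase_subset a t)), ?_⟩
  rintro rfl
  exact hs.ne (Finset.erase_insert has).symm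

namespace Term

variable {V : Type*}

theorem consistent.mono {s t : Term V} (hst : s ⊆ t) (ht : t.consistent) : s.consistent :=
  fun v hv => ht v ⟨hst hv.1, hst hv.2⟩

variable [DecidableEq V]

theorem sat_insert {p : V × Bool} {t : Term V} {y : V → Bool} :
    Term.sat (insert p t) y ↔ y p.1 = p.2 ∧ t.sat y :=
  Finset.forall_mem_insert _ _ _

variable {i : V} {t : Term V}

theorem sat_update_iff (hi : ∀ c, (i, c) ∉ t) (y : V → Bool) (b : Bool) :
    t.sat (Function.update y i b) ↔ t.sat y := by
  refine forall₂_congr fun p hp => ?_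
  have hpi : p.1 ≠ i := fun h => hi p.2 (h ▸ hp)
  rw [Function.update_of_ne hpi]

theorem consistent_insert_iff (hi : ∀ c, (i, c) ∉ t) (b : Bool) :
    Term.consistent (insert (i, b) t) ↔ t.consistent := by
  refine ⟨consistent.mono (Finset.subset_insert _ _), fun ht v hv => ?_⟩
  simp only [Finset.mem_insert, Prod.mk.injEq] at hv
  obtain ⟨⟨rfl, rfl⟩ | h₁, ⟨hvi, h₂⟩ | h₂⟩ := hv
  · exact Bool.false_ne_true h₂
  · exact hi false h₂
  · exact hi true (hvi ▸ h₁)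
  · exact ht v ⟨h₁, h₂⟩

theorem consistent.forall_notMem_erase (ht : t.consistent) {b : Bool} (hb : (i, b) ∈ t) :
    ∀ c, (i, c) ∉ t.erase (i, b) := by
  intro c hc
  obtain ⟨hcb, hct⟩ := Finset.mem_erase.mp hc
  cases b <;> cases c
  · exact hcb rfl
  · exact ht i ⟨hct, hb⟩
  · exact ht i ⟨hb, hct⟩
  · exact hcb rfl

end Term

section Cofactor

variable {V : Type*} [DecidableEq V] {f : (V → Bool) → Bool} {i : V} {t : Term V}

theorem condF_of_apply_eq {b : Bool} {y : V → Bool} (hy : y i = b) : condF f (i, b) y = f y := by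
  rw [condF, ← hy, Function.update_eq_self]

theorem implicant_insert_iff (hi : ∀ c, (i, c) ∉ t) (b : Bool) :
    Implicant f (insert (i, b) t) ↔ Implicant (condF f (i, b)) t := by
  simp only [Implicant, Term.consistent_insert_iff hi]
  refine and_congr_right fun _ => ⟨fun hf y hy => ?_, fun hf y hy => ?_⟩
  · exact hf _ (Term.sat_insert.mpr
      ⟨Function.update_self .., (Term.sat_update_iff hi y b).mpr hy⟩)
  · obtain ⟨hyi, hy⟩ := Term.sat_insert.mp hy
    exact (condF_of_apply_eq (f := f) hyi).symm.trans (hf y hy)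

theorem implicant_condF_and_condF_iff (hi : ∀ c, (i, c) ∉ t) :
    Implicant (fun y => condF f (i, false) y && condF f (i, true) y) t ↔ Implicant f t := by
  refine and_congr_right fun _ => ⟨fun hf y hy => ?_, fun hf y hy => ?_⟩
  · have hboth := Bool.and_eq_true_iff.mp (hf y hy)
    cases hyi : y i
    · exact (condF_of_apply_eq hyi).symm.trans hboth.1
    · exact (condF_of_apply_eq hyi).symm.trans hboth.2
  · exact Bool.and_eq_true_iff.mpr
      ⟨hf _ ((Term.sat_update_iff hi y _).mpr hy), hf _ ((Term.sat_update_iff hi y _).mpr hy)⟩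

theorem PrimeImplicant.condF_erase {b : Bool} (ht : PrimeImplicant f t) (hb : (i, b) ∈ t) :
    PrimeImplicant (condF f (i, b)) (t.erase (i, b)) := by
  have hi := ht.1.1.forall_notMem_erase hb
  refine ⟨(implicant_insert_iff hi b).mp ((Finset.insert_erase hb).symm ▸ ht.1), ?_⟩
  intro s hs hsf
  have hsi : ∀ c, (i, c) ∉ s := fun c hc => hi c (hs.subset hc)
  exact ht.2 _ (Finset.insert_ssubset_of_ssubset_erase hb hs)
    ((implicant_insert_iff hsi b).mpr hsf)

theorem PrimeImplicant.condF_and_condF (ht : PrimeImplicant f t) (hi : ∀ c, (i, c) ∉ t) :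
    PrimeImplicant (fun y => condF f (i, false) y && condF f (i, true) y) t :=
  ⟨(implicant_condF_and_condF_iff hi).mpr ht.1, fun s hs hsf =>
    ht.2 s hs ((implicant_condF_and_condF_iff fun c hc => hi c (hs.subset hc)).mp hsf)⟩

end Cofactor

theorem stmt_7_general {n : ℕ} (f : (Fin n → Bool) → Bool) (i : Fin n)
    (t : Term (Fin n)) (ht : PrimeImplicant f t) :
    PrimeImplicant (fun y => condF f (i, false) y && condF f (i, true) y) t ∨
    (∃ t' : Term (Fin n), PrimeImplicant (condF f (i, false)) t' ∧ t = insert (i, false) t') ∨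
    (∃ t' : Term (Fin n), PrimeImplicant (condF f (i, true)) t' ∧ t = insert (i, true) t') := by
  by_cases hneg : (i, false) ∈ t
  · exact Or.inr (Or.inl ⟨_, ht.condF_erase hneg, (Finset.insert_erase hneg).symm⟩)
  by_cases hpos : (i, true) ∈ t
  · exact Or.inr (Or.inr ⟨_, ht.condF_erase hpos, (Finset.insert_erase hpos).symm⟩)
  exact Or.inl (ht.condF_and_condF fun c => by cases c <;> assumption)

/-- Every prime implicant of `f` is either a prime implicant of `(f | x̄) ∧ (f | x)`,
or of the form `x̄ ∧ t` with `t` a prime implicant of `f | x̄`, or of the form `x ∧ t`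
with `t` a prime implicant of `f | x`. -/
theorem stmt_7 {n : ℕ} (f : (Fin n → Bool) → Bool) (i : Fin n)
    (hvar : ∃ y, f (Function.update y i true) ≠ f (Function.update y i false))
    (t : Term (Fin n)) (ht : PrimeImplicant f t) :
    PrimeImplicant (fun y => condF f (i, false) y && condF f (i, true) y) t ∨
    (∃ t' : Term (Fin n), PrimeImplicant (condF f (i, false)) t' ∧ t = insert (i, false) t') ∨
    (∃ t' : Term (Fin n), PrimeImplicant (condF f (i, true)) t' ∧ t = insert (i, true) t') :=
  stmt_7_general f i t ht
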